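/- arXiv:2108.05161 — 2 statements merged into one kernel-verified Lean document; each statement's English description precedes it below -/
import Mathlib

section
/- If F : ℂⁿ → ℂ (n ≥ 1) is holomorphic on all of ℂⁿ and its range omits at least two distinct complex values, then F is constant. -/
/-!
Little Picard in one variable follows the classical route through Bloch-type discs. If an entire
`f` omits `0` and `1`, write `f = exp (2πi u)`; then `u` omits every integer, so `u` and `u - 1`
have entire square roots `s`, `t`, and `s - t = exp W` with `cosh W = s`, i.e. `u = cosh² W`.
Hence `W` omits the points `±arcosh √n + mπi`, which come within distance `4` of every point of
`ℂ`. On the other hand, the range of a nonconstant entire function contains arbitrarily large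
discs: maximising `(R - |z - y|) |W' z|` over a disc produces a point `a` and a radius `r` with
`r |W' a|` large and `|W'| ≤ 2 |W' a|` on the disc of radius `r` about `a`; by the Schwarz lemma
`W` is then close to its linearisation at `a` on a smaller disc, whose image therefore contains a
disc of radius comparable to `r |W' a|`. So `W`, hence `f`, is constant.

In several variables, restrict `F` to the complex line through any two points.
-/

open Complex Metric Set Filter Topology
open scoped Real

theorem Differentiable.exists_cexp_eq {f : ℂ → ℂ} (hf : Differentiable ℂ f) (h₀ : ∀ z, f z ≠ 0) :
    ∃ g : ℂ → ℂ, Differentiable ℂ g ∧ ∀ z, cexp (g z) = f z := by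
  obtain ⟨g, hg₀, hg⟩ := (hf.deriv.div hf h₀).isExactOn_univ.with_val_at 0 (Complex.log (f 0))
  have hderiv : ∀ z, HasDerivAt (fun z => f z * cexp (-g z)) 0 z := fun z => by
    refine ((hf z).hasDerivAt.mul (hg z (mem_univ z)).neg.cexp).congr_deriv ?_
    rw [Pi.div_apply]
    field_simp [h₀ z]
    ring
  have hconst (z : ℂ) : f z * cexp (-g z) = 1 := by
    rw [is_const_of_deriv_eq_zero (fun z => (hderiv z).differentiableAt)
      (fun z => (hderiv z).deriv) z 0, hg₀, exp_neg, exp_log (h₀ 0), mul_inv_cancel₀ (h₀ 0)]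
  refine ⟨g, fun z => (hg z (mem_univ z)).differentiableAt, fun z => ?_⟩
  have := hconst z
  rw [exp_neg] at this
  exact (eq_of_mul_inv_eq_one this).symm

theorem Differentiable.exists_sq_eq {f : ℂ → ℂ} (hf : Differentiable ℂ f) (h₀ : ∀ z, f z ≠ 0) :
    ∃ s : ℂ → ℂ, Differentiable ℂ s ∧ ∀ z, s z ^ 2 = f z := by
  obtain ⟨g, hg, hgf⟩ := hf.exists_cexp_eq h₀
  refine ⟨fun z => cexp (g z / 2), (hg.div_const 2).cexp, fun z => ?_⟩
  rw [← exp_nat_mul, ← hgf z]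
  congr 1
  push_cast
  ring

theorem exists_ball_forall_le_two_mul {X : Type*} [PseudoMetricSpace X] [ProperSpace X]
    {φ : X → ℝ} (hφ : Continuous φ) (hφ₀ : ∀ x, 0 ≤ φ x) {y : X} (hy : 0 < φ y) (M : ℝ) :
    ∃ a r, 0 < r ∧ M ≤ r * φ a ∧ ∀ z ∈ ball a r, φ z ≤ 2 * φ a := by
  set R := 2 * |M| / φ y + 1
  have hR : 0 < R := by positivity
  have hRy : 2 * M < R * φ y := by
    have : R * φ y = 2 * |M| + φ y := by simp only [R]; field_simp
    linarith [le_abs_self M]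
  obtain ⟨a, -, hmax⟩ := (isCompact_closedBall y R).exists_isMaxOn
    ⟨y, mem_closedBall_self hR.le⟩
    ((continuous_const.sub (continuous_id.dist continuous_const)).mul hφ).continuousOn
  have hmax' : ∀ z, dist z y ≤ R → (R - dist z y) * φ z ≤ (R - dist a y) * φ a :=
    fun z hz => hmax (mem_closedBall.2 hz)
  have hya : R * φ y ≤ (R - dist a y) * φ a := by
    simpa using hmax' y (by simp [hR.le])
  have hay : dist a y < R := by
    by_contra! h
    nlinarith [mul_nonneg (sub_nonneg.2 h) (hφ₀ a)]
  refine ⟨a, (R - dist a y) / 2, by linarith, by linarith, fun z hz => ?_⟩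
  have hzy : dist z y < R - (R - dist a y) / 2 := by
    linarith [dist_triangle z a y, mem_ball.1 hz]
  have := hmax' z (by linarith)
  nlinarith [hφ₀ z]

theorem norm_sub_le_half_of_norm_le_two_mul {E F : Type*} [NormedAddCommGroup E] [NormedSpace ℂ E]
    [NormedAddCommGroup F] [NormedSpace ℂ F] {f : E → F} {a : E} {r : ℝ} (hr : 0 < r)
    (hf : DifferentiableOn ℂ f (ball a r)) (hbd : ∀ z ∈ ball a r, ‖f z‖ ≤ 2 * ‖f a‖) :
    ∀ z ∈ closedBall a (r / 6), ‖f z - f a‖ ≤ ‖f a‖ / 2 := by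
  have hmaps : MapsTo f (ball a r) (closedBall (f a) (3 * ‖f a‖)) := fun z hz => by
    rw [mem_closedBall, dist_eq_norm]
    linarith [norm_sub_le (f z) (f a), hbd z hz]
  intro z hz
  have hz' : dist z a ≤ r / 6 := mem_closedBall.1 hz
  calc ‖f z - f a‖ = dist (f z) (f a) := (dist_eq_norm _ _).symm
    _ ≤ 3 * ‖f a‖ / r * dist z a :=
      Complex.dist_le_div_mul_dist_of_mapsTo_ball hf hmaps
        (closedBall_subset_ball (by linarith) hz)
    _ ≤ 3 * ‖f a‖ / r * (r / 6) := by gcongr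
    _ = ‖f a‖ / 2 := by field_simp; ring

theorem ball_subset_range_of_norm_deriv_sub_le {h : ℂ → ℂ} (hh : Differentiable ℂ h) {a : ℂ}
    {ρ : ℝ} (hρ : 0 < ρ) (ha : deriv h a ≠ 0)
    (hclose : ∀ z ∈ closedBall a ρ, ‖deriv h z - deriv h a‖ ≤ ‖deriv h a‖ / 2) :
    ball (h a) (‖deriv h a‖ * ρ / 4) ⊆ range h := by
  set B := ‖deriv h a‖
  have hlin : ∀ z ∈ closedBall a ρ, ‖(h z - deriv h a * z) - (h a - deriv h a * a)‖
      ≤ B / 2 * ‖z - a‖ := fun z hz =>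
    (convex_closedBall a ρ).norm_image_sub_le_of_norm_hasDerivWithin_le
      (fun w _ => (((hh w).hasDerivAt.sub ((hasDerivAt_id w).const_mul (deriv h a))).congr_deriv
        (by simp)).hasDerivWithinAt) hclose (mem_closedBall_self hρ.le) hz
  have hsphere : ∀ z ∈ sphere a ρ, B * ρ / 2 ≤ ‖h z - h a‖ := fun z hz => by
    have hzρ : ‖z - a‖ = ρ := mem_sphere_iff_norm.1 hz
    have h1 := hlin z (sphere_subset_closedBall hz)
    have h2 : ‖deriv h a * (z - a)‖ = B * ρ := by rw [norm_mul, hzρ]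
    have h3 := norm_sub_norm_le (deriv h a * (z - a)) (h z - h a)
    rw [hzρ] at h1
    rw [show deriv h a * (z - a) - (h z - h a) = -((h z - deriv h a * z) - (h a - deriv h a * a))
      by ring, norm_neg] at h3
    linarith
  have hne : ∃ᶠ z in 𝓝 a, h z ≠ h a :=
    ((hh a).hasDerivAt.eventually_ne ha).frequently.filter_mono nhdsWithin_le_nhds
  have := hh.diffContOnCl.ball_subset_image_closedBall hρ hsphere hne
  rw [show B * ρ / 4 = B * ρ / 2 / 2 by ring]
  exact this.trans (image_subset_range _ _)

theorem exists_ball_subset_range_of_deriv_ne_zero {h : ℂ → ℂ} (hh : Differentiable ℂ h) {y : ℂ}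
    (hy : deriv h y ≠ 0) (d : ℝ) : ∃ p, ball p d ⊆ range h := by
  obtain ⟨a, r, hr, hM, hbd⟩ := exists_ball_forall_le_two_mul hh.deriv.continuous.norm
    (fun _ => norm_nonneg _) (norm_pos_iff.2 hy) (24 * (|d| + 1))
  have ha : deriv h a ≠ 0 := by
    rintro h0
    rw [h0, norm_zero, mul_zero] at hM
    linarith [abs_nonneg d]
  refine ⟨h a, (ball_subset_ball ?_).trans <| ball_subset_range_of_norm_deriv_sub_le hh
    (by positivity) ha <| norm_sub_le_half_of_norm_le_two_mul hr hh.deriv.differentiableOn hbd⟩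
  linarith [le_abs_self d]

theorem Real.exists_cosh_sq_eq_natCast_near (x : ℝ) :
    ∃ t : ℝ, |x - t| ≤ 2 ∧ ∃ n : ℕ, Real.cosh t ^ 2 = n := by
  wlog hx : 0 ≤ x
  · obtain ⟨t, ht, n, hn⟩ := this (-x) (by linarith)
    exact ⟨-t, by rwa [← abs_neg, neg_sub, neg_sub_comm], n, by rwa [Real.cosh_neg]⟩
  set n := ⌈Real.exp (2 * x)⌉₊
  have hn : Real.exp (2 * x) ≤ n := Nat.le_ceil _
  have hn' : (n : ℝ) < Real.exp (2 * x) + 1 := Nat.ceil_lt_add_one (Real.exp_pos _).le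
  have h1 : 1 ≤ Real.exp (2 * x) := Real.one_le_exp (by linarith)
  have hsq : √(n : ℝ) ^ 2 = n := Real.sq_sqrt (by linarith)
  have hexp_sq : Real.exp x ^ 2 = Real.exp (2 * x) := by rw [← Real.exp_nat_mul]; norm_num
  have hle : Real.exp x ≤ √(n : ℝ) := Real.le_sqrt_of_sq_le (by linarith)
  have h1n : 1 ≤ √(n : ℝ) := (Real.one_le_exp hx).trans hle
  set t := Real.arcosh √(n : ℝ)
  have hexp_t := Real.exp_arcosh h1n
  have hroot : √(√(n : ℝ) ^ 2 - 1) ≤ √(n : ℝ) := by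
    rw [Real.sqrt_le_left (by positivity)]
    linarith
  have hlow : x ≤ t := by
    rw [← Real.exp_le_exp, hexp_t]
    linarith [Real.sqrt_nonneg (√(n : ℝ) ^ 2 - 1)]
  have hup : t ≤ x + 2 := by
    have h9 : 9 ≤ Real.exp 4 := by
      have := Real.add_one_le_exp 2
      rw [show (4 : ℝ) = 2 + 2 by norm_num, Real.exp_add]
      nlinarith
    have hsq' : (2 * √(n : ℝ)) ^ 2 ≤ Real.exp (x + 2) ^ 2 := by
      rw [← Real.exp_nat_mul, mul_pow, hsq, show ((2 : ℕ) : ℝ) * (x + 2) = 2 * x + 4 by ring,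
        Real.exp_add]
      nlinarith
    rw [← Real.exp_le_exp, hexp_t]
    linarith [(pow_le_pow_iff_left₀ (by positivity) (by positivity) two_ne_zero).1 hsq']
  refine ⟨t, abs_le.2 ⟨by linarith, by linarith⟩, n, by rw [Real.cosh_arcosh h1n, hsq]⟩

theorem Complex.cosh_add_int_mul_pi_mul_I_sq (z : ℂ) (m : ℤ) :
    cosh (z + m * π * I) ^ 2 = cosh z ^ 2 := by
  have hsin : sin (m * π) = 0 := by exact_mod_cast sin_int_mul_pi m
  have hcos : cos (m * π) ^ 2 = 1 := by simpa [hsin] using cos_sq_add_sin_sq (m * π : ℂ)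
  rw [cosh_add, cosh_mul_I, sinh_mul_I, hsin]
  linear_combination cosh z ^ 2 * hcos

theorem Complex.exists_cosh_sq_eq_natCast_near (p : ℂ) :
    ∃ q : ℂ, dist p q < 4 ∧ ∃ n : ℕ, cosh q ^ 2 = n := by
  obtain ⟨t, ht, n, hn⟩ := Real.exists_cosh_sq_eq_natCast_near p.re
  set m := round (p.im / π)
  refine ⟨t + m * π * I, ?_, n, ?_⟩
  · have him : |p.im - m * π| ≤ π / 2 := by
      have := abs_sub_round (p.im / π)
      rw [show p.im - m * π = (p.im / π - m) * π by field_simp, abs_mul, abs_of_pos Real.pi_pos]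
      nlinarith [Real.pi_pos]
    calc dist p (t + m * π * I) ≤ |p.re - t| + |p.im - m * π| := by
          simpa [dist_eq] using norm_le_abs_re_add_abs_im (p - (t + m * π * I))
      _ ≤ 2 + π / 2 := by linarith
      _ < 4 := by linarith [Real.pi_lt_d2]
  · rw [cosh_add_int_mul_pi_mul_I_sq, ← ofReal_cosh, ← ofReal_pow, hn, ofReal_natCast]

theorem Differentiable.exists_cosh_sq_eq {u : ℂ → ℂ} (hu : Differentiable ℂ u)
    (h₀ : ∀ z, u z ≠ 0) (h₁ : ∀ z, u z ≠ 1) :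
    ∃ W : ℂ → ℂ, Differentiable ℂ W ∧ ∀ z, Complex.cosh (W z) ^ 2 = u z := by
  obtain ⟨s, hs, hsu⟩ := hu.exists_sq_eq h₀
  obtain ⟨t, ht, htu⟩ := (hu.sub_const 1).exists_sq_eq fun z => sub_ne_zero.2 (h₁ z)
  have hst (z : ℂ) : (s z - t z) * (s z + t z) = 1 := by
    linear_combination hsu z - htu z
  obtain ⟨W, hW, hWst⟩ := (hs.sub ht).exists_cexp_eq fun z => left_ne_zero_of_mul_eq_one (hst z)
  refine ⟨W, hW, fun z => ?_⟩
  have hWst' : cexp (W z) = s z - t z := hWst z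
  have hinv : cexp (-W z) = s z + t z := by
    rw [exp_neg, hWst']
    exact inv_eq_of_mul_eq_one_right (hst z)
  have hcosh : 2 * Complex.cosh (W z) = 2 * s z := by
    rw [two_cosh, hWst', hinv]
    ring
  rw [mul_left_cancel₀ two_ne_zero hcosh, hsu z]

theorem Differentiable.apply_eq_apply_of_cosh_sq_ne_natCast {W : ℂ → ℂ} (hW : Differentiable ℂ W)
    (hW_ne : ∀ z (n : ℕ), Complex.cosh (W z) ^ 2 ≠ n) (z w : ℂ) : W z = W w := by
  by_contra hzw
  obtain ⟨y, hy⟩ := not_forall.1 (mt (is_const_of_deriv_eq_zero hW · z w) hzw)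
  obtain ⟨p, hp⟩ := exists_ball_subset_range_of_deriv_ne_zero hW hy 4
  obtain ⟨q, hpq, n, hq⟩ := Complex.exists_cosh_sq_eq_natCast_near p
  obtain ⟨x, rfl⟩ := hp (mem_ball'.2 hpq)
  exact hW_ne x n hq

theorem Differentiable.apply_eq_apply_of_ne_zero_of_ne_one {f : ℂ → ℂ} (hf : Differentiable ℂ f)
    (h₀ : ∀ z, f z ≠ 0) (h₁ : ∀ z, f z ≠ 1) (z w : ℂ) : f z = f w := by
  obtain ⟨g, hg, hgf⟩ := hf.exists_cexp_eq h₀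
  have h2πI : 2 * π * I ≠ 0 := two_pi_I_ne_zero
  have hu_ne (z : ℂ) (k : ℤ) : g z / (2 * π * I) ≠ k := fun hk => h₁ z <| by
    rw [← hgf z, (div_eq_iff h2πI).1 hk, exp_int_mul_two_pi_mul_I]
  have hu : Differentiable ℂ fun z => g z / (2 * π * I) := hg.div_const _
  obtain ⟨W, hW, hWu⟩ := hu.exists_cosh_sq_eq
    (fun z => by exact_mod_cast hu_ne z 0) (fun z => by exact_mod_cast hu_ne z 1)
  have hWzw := hW.apply_eq_apply_of_cosh_sq_ne_natCast
    (fun z n => hWu z ▸ by exact_mod_cast hu_ne z n) z w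
  have hgzw : g z / (2 * π * I) = g w / (2 * π * I) := by rw [← hWu, ← hWu, hWzw]
  rw [← hgf z, ← hgf w, div_left_inj' h2πI |>.1 hgzw]

theorem Differentiable.apply_eq_apply_of_notMem_range {E : Type*} [NormedAddCommGroup E]
    [NormedSpace ℂ E] {f : E → ℂ} (hf : Differentiable ℂ f) {a b : ℂ} (hab : a ≠ b)
    (ha : a ∉ range f) (hb : b ∉ range f) (x y : E) : f x = f y := by
  set g : ℂ → ℂ := fun t => (f (x + t • (y - x)) - a) / (b - a)
  have hba : b - a ≠ 0 := sub_ne_zero.2 hab.symm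
  have hg : Differentiable ℂ g :=
    ((hf.comp ((differentiable_id.smul_const (y - x)).const_add x)).sub_const a).div_const _
  have h₀ (t : ℂ) : g t ≠ 0 := by
    simpa [g, hba, sub_eq_zero] using fun h => ha ⟨_, h⟩
  have h₁ (t : ℂ) : g t ≠ 1 := by
    simpa [g, div_eq_one_iff_eq hba] using fun h => hb ⟨_, h⟩
  simpa [g, hba] using hg.apply_eq_apply_of_ne_zero_of_ne_one h₀ h₁ 0 1

theorem stmt3_general (n : ℕ) (F : (Fin n → ℂ) → ℂ)
    (hF : Differentiable ℂ F)
    (h : ∃ a b : ℂ, a ≠ b ∧ a ∉ Set.range F ∧ b ∉ Set.range F) :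
    ∃ c : ℂ, ∀ z, F z = c := by
  obtain ⟨a, b, hab, ha, hb⟩ := h
  exact ⟨F 0, fun z => hF.apply_eq_apply_of_notMem_range hab ha hb z 0⟩

theorem stmt3 (n : ℕ) (hn : 1 ≤ n) (F : (Fin n → ℂ) → ℂ)
    (hF : Differentiable ℂ F)
    (h : ∃ a b : ℂ, a ≠ b ∧ a ∉ Set.range F ∧ b ∉ Set.range F) :
    ∃ c : ℂ, ∀ z, F z = c :=
  stmt3_general n F hF h
end

section
/- Let f : ℂ → ℂ be entire. If the range of f is contained in ℂ \ {0} and also the range of z ↦ f z - 1 is contained in ℂ \ {0}, then f' ≡ 0. -/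
/-!
Write `f = exp (2πi g)`. Then `g` is entire and omits every integer, in particular `±1`, so
`g = cosh h` for an entire `h`, and `h` omits `{w | cosh w ∈ ℤ}`, a set meeting every disc of
radius `4`. If `f' ≢ 0`, then `h` is nonconstant, and Bloch's theorem puts discs of arbitrarily
large radius inside the range of `h`, a contradiction.
-/

open Complex Metric Set

namespace Differentiable

variable {g : ℂ → ℂ}

theorem exists_eq_exp (hg : Differentiable ℂ g) (hg0 : ∀ z, g z ≠ 0) :
    ∃ h : ℂ → ℂ, Differentiable ℂ h ∧ ∀ z, g z = Complex.exp (h z) := by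
  -- `h` is a primitive of the logarithmic derivative `g' / g`, shifted by a constant
  obtain ⟨F, hF⟩ := (hg.deriv.div hg hg0).isExactOn_univ
  have hG (z : ℂ) : HasDerivAt (fun z => g z * Complex.exp (-F z)) 0 z := by
    refine ((hg z).hasDerivAt.mul (hF z (mem_univ z)).fun_neg.cexp).congr_deriv ?_
    rw [Pi.div_apply]
    field_simp [hg0 z]
    ring
  have hconst (z : ℂ) : g z * Complex.exp (-F z) = g 0 * Complex.exp (-F 0) :=
    is_const_of_deriv_eq_zero (fun z => (hG z).differentiableAt) (fun z => (hG z).deriv) z 0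
  refine ⟨fun z => F z + Complex.log (g 0 * Complex.exp (-F 0)),
    fun z => (hF z (mem_univ z)).differentiableAt.add_const _, fun z => ?_⟩
  rw [Complex.exp_add, Complex.exp_log (mul_ne_zero (hg0 0) (Complex.exp_ne_zero _)), ← hconst,
    Complex.exp_neg]
  field_simp

theorem exists_sq_eq_s11 (hg : Differentiable ℂ g) (hg0 : ∀ z, g z ≠ 0) :
    ∃ v : ℂ → ℂ, Differentiable ℂ v ∧ ∀ z, v z ^ 2 = g z := by
  obtain ⟨h, hh, hgh⟩ := hg.exists_eq_exp hg0
  refine ⟨fun z => Complex.exp (h z / 2), (hh.div_const 2).cexp, fun z => ?_⟩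
  rw [← Complex.exp_nat_mul, hgh]
  congr 1
  ring

theorem exists_eq_cosh (hg : Differentiable ℂ g) (hg1 : ∀ z, g z ≠ 1) (hgm1 : ∀ z, g z ≠ -1) :
    ∃ h : ℂ → ℂ, Differentiable ℂ h ∧ ∀ z, g z = Complex.cosh (h z) := by
  obtain ⟨v, hv, hvg⟩ := (hg.fun_pow 2).sub_const 1 |>.exists_sq_eq fun z => by
    simpa [sub_eq_zero, not_or] using ⟨hg1 z, hgm1 z⟩
  -- `g + v` and `g - v` are reciprocal, so `g` is the mean of `exp h` and `exp (-h)`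
  have hprod (z : ℂ) : (g z + v z) * (g z - v z) = 1 := by linear_combination -hvg z
  obtain ⟨h, hh, hgvh⟩ := (hg.fun_add hv).exists_eq_exp fun z hz => by
    simpa [hz] using hprod z
  refine ⟨h, hh, fun z => ?_⟩
  have hsub : g z - v z = Complex.exp (-h z) := by
    rw [Complex.exp_neg, ← hgvh]
    exact eq_inv_of_mul_eq_one_right (hprod z)
  rw [Complex.cosh, ← hgvh, ← hsub]
  ring

end Differentiable

/-- Landau's rescaling: `p` maximizes `(r - dist z z₀) * ‖g z‖` over `closedBall z₀ r`, and `ρ` is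
half the distance from `p` to the boundary sphere. -/
theorem exists_ball_norm_le_two_mul_norm {E F : Type*} [SeminormedAddCommGroup E] [ProperSpace E]
    [NormedAddCommGroup F] {g : E → F} (hg : Continuous g) {z₀ : E} (hz₀ : g z₀ ≠ 0) {r : ℝ}
    (hr : 0 < r) :
    ∃ p ρ, 0 < ρ ∧ r * ‖g z₀‖ ≤ 2 * ρ * ‖g p‖ ∧ ∀ z ∈ ball p ρ, ‖g z‖ ≤ 2 * ‖g p‖ := by
  set φ : E → ℝ := fun z => (r - dist z z₀) * ‖g z‖
  obtain ⟨p, -, hmax⟩ := (isCompact_closedBall z₀ r).exists_isMaxOn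
    ⟨z₀, mem_closedBall_self hr.le⟩ (by fun_prop : Continuous φ).continuousOn
  set ρ := (r - dist p z₀) / 2
  have hpρ : dist p z₀ = r - 2 * ρ := by ring
  have hφp : φ p = 2 * ρ * ‖g p‖ := by simp only [φ, hpρ]; ring
  have hφz₀ : r * ‖g z₀‖ ≤ 2 * ρ * ‖g p‖ := by
    simpa [φ, hφp] using hmax (mem_closedBall_self hr.le)
  have hρ : 0 < ρ := by
    by_contra! hρ
    nlinarith [norm_nonneg (g p), mul_pos hr (norm_pos_iff.2 hz₀)]
  refine ⟨p, ρ, hρ, hφz₀, fun z hz => ?_⟩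
  have hzp : dist z z₀ ≤ r - ρ := by
    linarith [dist_triangle z p z₀, mem_ball.1 hz]
  have hφz : ρ * ‖g z‖ ≤ φ z :=
    mul_le_mul_of_nonneg_right (by linarith) (norm_nonneg _)
  have := hφz.trans (hφp ▸ hmax (mem_closedBall.2 (by linarith)))
  nlinarith

theorem Complex.surjOn_closedBall_of_norm_deriv_sub_le {h : ℂ → ℂ} {p a : ℂ} {δ : ℝ}
    (hd : ∀ z ∈ closedBall p δ, DifferentiableAt ℂ h z) (hδ : 0 ≤ δ)
    (hderiv : ∀ z ∈ closedBall p δ, ‖deriv h z - a‖ ≤ ‖a‖ / 2) :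
    SurjOn h (closedBall p δ) (closedBall (h p) (‖a‖ / 2 * δ)) := by
  rcases eq_or_ne a 0 with rfl | ha
  · simp only [norm_zero, zero_div, zero_mul, closedBall_zero, SurjOn, singleton_subset_iff]
    exact mem_image_of_mem h (mem_closedBall_self hδ)
  set A := ContinuousLinearMap.toSpanSingleton ℂ a
  have hA : ∀ z ∈ closedBall p δ, ‖fderiv ℂ h z - A‖ ≤ ‖a‖ / 2 := fun z hz => by
    have : fderiv ℂ h z - A = ContinuousLinearMap.toSpanSingleton ℂ (deriv h z - a) := by
      ext
      simp [(hd z hz).hasDerivAt.hasFDerivAt.fderiv, A]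
    rw [this, ContinuousLinearMap.norm_toSpanSingleton]
    exact hderiv z hz
  have happrox : ApproximatesLinearOn h A (closedBall p δ) (‖a‖₊ / 2) := fun x hx y hy => by
    simpa using (convex_closedBall p δ).norm_image_sub_le_of_norm_fderiv_le' hd hA hy hx
  let A_inv : A.NonlinearRightInverse :=
    { toFun := fun y => a⁻¹ * y
      nnnorm := ‖a⁻¹‖₊
      bound' := fun y => by simp
      right_inv' := fun y => by simp [A, ha, mul_comm] }
  have hradius : ((A_inv.nnnorm : ℝ)⁻¹ - (‖a‖₊ / 2 : NNReal)) * δ = ‖a‖ / 2 * δ := by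
    simp only [A_inv, nnnorm_inv, NNReal.coe_inv, coe_nnnorm, inv_inv, NNReal.coe_div,
      NNReal.coe_ofNat]
    ring
  rw [← hradius]
  exact happrox.surjOn_closedBall_of_nonlinearRightInverse A_inv hδ subset_rfl

theorem Complex.exists_closedBall_subset_range_of_deriv_ne_zero {h : ℂ → ℂ}
    (hh : Differentiable ℂ h) {z₀ : ℂ} (hz₀ : deriv h z₀ ≠ 0) {r : ℝ} (hr : 0 < r) :
    ∃ c, closedBall c (r * ‖deriv h z₀‖ / 24) ⊆ range h := by
  obtain ⟨p, ρ, hρ, hz₀p, hbound⟩ :=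
    exists_ball_norm_le_two_mul_norm hh.deriv.continuous hz₀ hr
  set m := ‖deriv h p‖
  have hm : 0 < m := by nlinarith [mul_pos hr (norm_pos_iff.2 hz₀)]
  -- Schwarz's lemma for `h'` on `ball p ρ`, whose image lies in `closedBall (h' p) (3 * m)`
  have hschwarz : ∀ z ∈ ball p ρ, dist (deriv h z) (deriv h p) ≤ 3 * m / ρ * dist z p :=
    fun z hz => Complex.dist_le_div_mul_dist_of_mapsTo_ball hh.deriv.differentiableOn
      (fun w hw => mem_closedBall.2 <| (dist_le_norm_add_norm _ _).trans <| by
        linarith [hbound w hw]) hz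
  have hclose : ∀ z ∈ closedBall p (ρ / 6), ‖deriv h z - deriv h p‖ ≤ m / 2 := by
    intro z hz
    calc ‖deriv h z - deriv h p‖ ≤ 3 * m / ρ * dist z p :=
          dist_eq_norm (deriv h z) _ ▸ hschwarz z (closedBall_subset_ball (by linarith) hz)
      _ ≤ 3 * m / ρ * (ρ / 6) := by gcongr; exact hz
      _ = m / 2 := by field_simp; ring
  have hsurj := surjOn_closedBall_of_norm_deriv_sub_le (fun z _ => hh z) (by positivity) hclose
  refine ⟨h p, (closedBall_subset_closedBall ?_).trans hsurj.subset_range⟩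
  linarith

theorem Real.cosh_add_one_le_cosh_add_two {x : ℝ} (hx : 0 ≤ x) : cosh x + 1 ≤ cosh (x + 2) := by
  have h2 : 2 ≤ cosh 2 := by
    have := quadratic_le_exp_of_nonneg (zero_le_two (α := ℝ))
    rw [cosh_eq]
    nlinarith [exp_pos (-2)]
  rw [cosh_add]
  nlinarith [one_le_cosh x, mul_nonneg (sinh_nonneg_iff.2 hx) (sinh_nonneg_iff.2 zero_le_two)]

theorem Real.exists_abs_sub_le_two_cosh_eq_intCast (x : ℝ) :
    ∃ y, |y - x| ≤ 2 ∧ ∃ n : ℤ, cosh y = n := by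
  wlog hx : 0 ≤ x generalizing x
  · obtain ⟨y, hy, n, hn⟩ := this (-x) (by linarith)
    exact ⟨-y, by rw [← abs_neg]; convert hy using 2; ring, n, by rwa [cosh_neg]⟩
  obtain ⟨y, hy, hyn⟩ := intermediate_value_Icc (by linarith : x ≤ x + 2)
    continuous_cosh.continuousOn
    (show (⌈cosh x⌉ : ℝ) ∈ Icc (cosh x) (cosh (x + 2)) from
      ⟨Int.le_ceil _, by linarith [Int.ceil_lt_add_one (cosh x), cosh_add_one_le_cosh_add_two hx]⟩)
  exact ⟨y, abs_le.2 ⟨by linarith [hy.1], by linarith [hy.2]⟩, _, hyn⟩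

theorem Complex.exists_dist_lt_four_cosh_eq_intCast (c : ℂ) :
    ∃ w, dist w c < 4 ∧ ∃ n : ℤ, cosh w = n := by
  obtain ⟨y, hy, n, hn⟩ := Real.exists_abs_sub_le_two_cosh_eq_intCast c.re
  set k := round (c.im / Real.pi)
  refine ⟨y + k * (Real.pi * I), ?_, k.negOnePow * n, ?_⟩
  · have him : |k * Real.pi - c.im| ≤ Real.pi / 2 := by
      have hk : k * Real.pi - c.im = -(c.im / Real.pi - k) * Real.pi := by
        field_simp
        ring
      rw [hk, abs_mul, abs_neg, abs_of_pos Real.pi_pos]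
      nlinarith [abs_sub_round (c.im / Real.pi), Real.pi_pos]
    have hre : (y + k * (Real.pi * I) - c).re = y - c.re := by simp
    have him' : (y + k * (Real.pi * I) - c).im = k * Real.pi - c.im := by simp
    rw [dist_eq_norm]
    refine (norm_le_abs_re_add_abs_im _).trans_lt ?_
    rw [hre, him']
    linarith [Real.pi_lt_four]
  · rw [cosh_antiperiodic.add_int_mul_eq, ← ofReal_cosh, hn]
    push_cast
    ring

theorem stmt11 (f : ℂ → ℂ) (hf : Differentiable ℂ f)
    (h0 : Set.range f ⊆ {0}ᶜ)
    (h1 : Set.range (fun z => f z - 1) ⊆ {0}ᶜ) :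
    deriv f = 0 := by
  obtain ⟨F, hF, hfF⟩ := hf.exists_eq_exp fun z hz => h0 ⟨z, rfl⟩ hz
  obtain ⟨g, hg, hfg⟩ : ∃ g, Differentiable ℂ g ∧ ∀ z, f z = exp (2 * Real.pi * I * g z) :=
    ⟨fun z => F z / (2 * Real.pi * I), hF.div_const _,
      fun z => by rw [hfF, mul_div_cancel₀ _ two_pi_I_ne_zero]⟩
  have hg_int (z : ℂ) (n : ℤ) : g z ≠ n := fun hn =>
    h1 ⟨z, rfl⟩ <| sub_eq_zero.2 <| by rw [hfg, hn, exp_eq_one_iff]; exact ⟨n, by ring⟩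
  obtain ⟨h, hh, hgh⟩ :=
    hg.exists_eq_cosh (by simpa using hg_int · 1) (by simpa using hg_int · (-1))
  by_contra hf'
  obtain ⟨z₀, hz₀⟩ : ∃ z₀, deriv h z₀ ≠ 0 := by
    by_contra! hh'
    have hconst : f = fun _ => f 0 := funext fun z => by
      rw [hfg, hfg, hgh, hgh, is_const_of_deriv_eq_zero hh hh' z 0]
    exact hf' (by rw [hconst]; exact deriv_const' _)
  obtain ⟨c, hc⟩ := exists_closedBall_subset_range_of_deriv_ne_zero hh hz₀
    (r := 96 / ‖deriv h z₀‖) (by positivity)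
  obtain ⟨w, hw, n, hn⟩ := exists_dist_lt_four_cosh_eq_intCast c
  obtain ⟨z, rfl⟩ := hc (mem_closedBall.2 (by field_simp; linarith))
  exact hg_int z n (by rw [hgh, hn])
end
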